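/- Let θ(x) = ∫₀^∞ (1/(e^t − 1) − 1/t + 1/2)·(e^{−xt}/t) dt be the remainder of Binet's first formula. Then for 0 < p ≤ 1 and q ≤ 1, the function x ↦ θ(px) − q·θ(x) is completely monotonic on (0, ∞), i.e., (−1)^n (d/dx)^n [θ(px) − q·θ(x)] ≥ 0 for all n ≥ 0 and x > 0. -/

import Mathlib

/-!
Rescaling the Binet integral gives `θ(px) - qθ(x) = ∫₀^∞ K(t) e^{-xt} dt` with
`K(t) = (δ(t/p) - qδ(t))/t`. Because `δ` is nonnegative and increasing, `K ≥ 0` when `p ≤ 1`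
and `q ≤ 1`; because `0 ≤ δ(t) ≤ t/4`, `K` is bounded, so one may differentiate under the
integral sign, and `(-1)ⁿ` times the `n`-th derivative is `∫₀^∞ tⁿ K(t) e^{-xt} dt ≥ 0`.
-/

open Real Set MeasureTheory Filter

noncomputable def binetDelta (t : ℝ) : ℝ := 1 / (exp t - 1) - 1 / t + 1 / 2

lemma two_mul_exp_sub_one_le_mul_exp_add_one {t : ℝ} (ht : 0 ≤ t) :
    2 * (exp t - 1) ≤ t * (exp t + 1) := by
  have hderiv : ∀ s, HasDerivAt (fun s => s * (exp s + 1) - 2 * (exp s - 1))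
      (1 - (1 - s) * exp s) s := fun s =>
    (((hasDerivAt_id' s).mul ((hasDerivAt_exp s).add_const 1)).sub
      (((hasDerivAt_exp s).sub_const 1).const_mul 2)).congr_deriv (by ring)
  have hderiv_nonneg : ∀ s, 0 ≤ 1 - (1 - s) * exp s := fun s => by
    have := mul_le_mul_of_nonneg_right (add_one_le_exp (-s)) (exp_pos s).le
    rw [← exp_add, neg_add_cancel, exp_zero] at this
    linarith
  have hmono := monotone_of_hasDerivAt_nonneg hderiv hderiv_nonneg ht
  simp only [exp_zero] at hmono
  linarith

lemma sq_mul_exp_le_exp_sub_one_sq {t : ℝ} (ht : 0 ≤ t) : t ^ 2 * exp t ≤ (exp t - 1) ^ 2 := by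
  have hsplit : exp t - 1 = 2 * sinh (t / 2) * exp (t / 2) := by
    have hsq : exp (t / 2) * exp (t / 2) = exp t := by rw [← exp_add]; ring_nf
    have hinv : exp (-(t / 2)) * exp (t / 2) = 1 := by rw [← exp_add]; simp
    rw [sinh_eq]; linear_combination -hsq + hinv
  have hsinh : t ≤ 2 * sinh (t / 2) := by
    linarith [Real.self_le_sinh_iff.2 (by positivity : (0 : ℝ) ≤ t / 2)]
  calc t ^ 2 * exp t = (t * exp (t / 2)) ^ 2 := by rw [mul_pow, ← exp_nat_mul]; ring_nf
    _ ≤ (2 * sinh (t / 2) * exp (t / 2)) ^ 2 := by gcongr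
    _ = (exp t - 1) ^ 2 := by rw [hsplit]

lemma binetDelta_nonneg {t : ℝ} (ht : 0 < t) : 0 ≤ binetDelta t := by
  have hE : 0 < exp t - 1 := sub_pos.2 (one_lt_exp_iff.2 ht)
  have key := two_mul_exp_sub_one_le_mul_exp_add_one ht.le
  have hform : binetDelta t = (t * (exp t + 1) - 2 * (exp t - 1)) / (2 * t * (exp t - 1)) := by
    unfold binetDelta; field_simp; ring
  rw [hform]; exact div_nonneg (by linarith) (by positivity)

lemma binetDelta_le_div_four {t : ℝ} (ht : 0 < t) : binetDelta t ≤ t / 4 := by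
  have hE : t + t ^ 2 / 2 ≤ exp t - 1 := by linarith [quadratic_le_exp_of_nonneg ht.le]
  have h₁ : 1 / (exp t - 1) ≤ 1 / (t + t ^ 2 / 2) := one_div_le_one_div_of_le (by positivity) hE
  have h₂ : 1 / (t + t ^ 2 / 2) ≤ 1 / t - 1 / 2 + t / 4 := by
    rw [div_le_iff₀ (by positivity)]
    field_simp
    nlinarith [pow_pos ht 3]
  unfold binetDelta; linarith

lemma hasDerivAt_binetDelta {t : ℝ} (ht : 0 < t) :
    HasDerivAt binetDelta (1 / t ^ 2 - exp t / (exp t - 1) ^ 2) t := by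
  have hE : exp t - 1 ≠ 0 := (sub_pos.2 (one_lt_exp_iff.2 ht)).ne'
  have h₁ : HasDerivAt (fun s => 1 / (exp s - 1)) (-exp t / (exp t - 1) ^ 2) t := by
    simpa only [one_div, neg_div] using ((hasDerivAt_exp t).sub_const 1).fun_inv hE
  have h₂ : HasDerivAt (fun s : ℝ => 1 / s) (-(1 / t ^ 2)) t := by
    simpa only [one_div] using hasDerivAt_inv ht.ne'
  exact ((h₁.sub h₂).add_const (1 / 2)).congr_deriv (by ring)

lemma monotoneOn_binetDelta : MonotoneOn binetDelta (Ioi 0) := by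
  refine monotoneOn_of_hasDerivWithinAt_nonneg (convex_Ioi 0)
    (fun t ht => (hasDerivAt_binetDelta ht).continuousAt.continuousWithinAt)
    (fun t ht => (hasDerivAt_binetDelta (by rwa [interior_Ioi] at ht)).hasDerivWithinAt)
    fun t ht => ?_
  rw [interior_Ioi, mem_Ioi] at ht
  have hE : 0 < exp t - 1 := sub_pos.2 (one_lt_exp_iff.2 ht)
  rw [sub_nonneg, div_le_div_iff₀ (by positivity) (by positivity), one_mul]
  linarith [sq_mul_exp_le_exp_sub_one_sq ht.le]

@[fun_prop]
lemma measurable_binetDelta : Measurable binetDelta := by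
  unfold binetDelta; fun_prop

noncomputable def laplaceTransform (K : ℝ → ℝ) (x : ℝ) : ℝ := ∫ t in Ioi 0, K t * exp (-x * t)

lemma integrableOn_pow_mul_exp_neg_mul (m : ℕ) {x : ℝ} (hx : 0 < x) :
    IntegrableOn (fun t : ℝ => t ^ m * exp (-x * t)) (Ioi 0) := by
  simpa only [rpow_natCast, rpow_one] using integrableOn_rpow_mul_exp_neg_mul_rpow
    (p := 1) (s := m) (by linarith [(Nat.cast_nonneg m : (0 : ℝ) ≤ m)]) one_pos hx

section Laplace

variable {K : ℝ → ℝ} {C : ℝ} {m : ℕ}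

lemma norm_mul_exp_neg_mul_le {k t x y : ℝ} (ht : 0 < t) (hxy : x ≤ y) (hk : |k| ≤ C * t ^ m) :
    ‖k * exp (-y * t)‖ ≤ C * (t ^ m * exp (-x * t)) := by
  rw [norm_mul, norm_of_nonneg (exp_pos _).le, ← mul_assoc]
  gcongr
  · exact (abs_nonneg _).trans hk
  · exact hk

lemma abs_neg_mul_le_of_abs_le (hC : ∀ t ∈ Ioi 0, |K t| ≤ C * t ^ m) :
    ∀ t ∈ Ioi 0, |-t * K t| ≤ C * t ^ (m + 1) := fun t ht => by
  rw [abs_mul, abs_neg, abs_of_pos (mem_Ioi.1 ht), pow_succ]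
  nlinarith [hC t ht, mem_Ioi.1 ht]

lemma integrableOn_laplaceTransform (hK : AEStronglyMeasurable K (volume.restrict (Ioi 0)))
    (hC : ∀ t ∈ Ioi 0, |K t| ≤ C * t ^ m) {x : ℝ} (hx : 0 < x) :
    IntegrableOn (fun t => K t * exp (-x * t)) (Ioi 0) := by
  refine ((integrableOn_pow_mul_exp_neg_mul m hx).const_mul C).mono'
    (hK.mul (by fun_prop : Continuous fun t => exp (-x * t)).aestronglyMeasurable) ?_
  filter_upwards [self_mem_ae_restrict measurableSet_Ioi] with t ht
  exact norm_mul_exp_neg_mul_le ht le_rfl (hC t ht)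

lemma hasDerivAt_laplaceTransform (hK : AEStronglyMeasurable K (volume.restrict (Ioi 0)))
    (hC : ∀ t ∈ Ioi 0, |K t| ≤ C * t ^ m) {x : ℝ} (hx : 0 < x) :
    HasDerivAt (laplaceTransform K) (laplaceTransform (fun t => -t * K t) x) x := by
  have hK' : AEStronglyMeasurable (fun t => -t * K t) (volume.restrict (Ioi 0)) :=
    continuous_neg.aestronglyMeasurable.mul hK
  have hball : ∀ y ∈ Metric.ball x (x / 2), x / 2 ≤ y := fun y hy => by
    rw [Metric.mem_ball, dist_comm, Real.dist_eq, abs_lt] at hy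
    linarith
  refine (hasDerivAt_integral_of_dominated_loc_of_deriv_le
    (F' := fun y t => -t * K t * exp (-y * t))
    (bound := fun t => C * (t ^ (m + 1) * exp (-(x / 2) * t)))
    (Metric.ball_mem_nhds x (half_pos hx))
    (Eventually.of_forall fun y =>
      hK.mul (by fun_prop : Continuous fun t => exp (-y * t)).aestronglyMeasurable)
    (integrableOn_laplaceTransform hK hC hx)
    (hK'.mul (by fun_prop : Continuous fun t => exp (-x * t)).aestronglyMeasurable)
    ?_ ((integrableOn_pow_mul_exp_neg_mul (m + 1) (half_pos hx)).const_mul C) ?_).2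
  · filter_upwards [self_mem_ae_restrict measurableSet_Ioi] with t ht y hy
    exact norm_mul_exp_neg_mul_le ht (hball y hy) (abs_neg_mul_le_of_abs_le hC t ht)
  · refine Eventually.of_forall fun t y _ => ?_
    exact (((hasDerivAt_neg' y).mul_const t).exp.const_mul (K t)).congr_deriv (by ring)

lemma iteratedDeriv_laplaceTransform (hK : AEStronglyMeasurable K (volume.restrict (Ioi 0)))
    (hC : ∀ t ∈ Ioi 0, |K t| ≤ C * t ^ m) (n : ℕ) {x : ℝ} (hx : 0 < x) :
    iteratedDeriv n (laplaceTransform K) x = laplaceTransform (fun t => (-t) ^ n * K t) x := by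
  induction n generalizing K m with
  | zero => simp
  | succ n ih =>
    have hderiv : deriv (laplaceTransform K) =ᶠ[nhds x]
        laplaceTransform (fun t => -t * K t) := by
      filter_upwards [Ioi_mem_nhds hx] with y hy
      exact (hasDerivAt_laplaceTransform hK hC hy).deriv
    rw [iteratedDeriv_succ', hderiv.iteratedDeriv_eq, ih (m := m + 1)]
    · simp only [pow_succ, mul_assoc]
    · exact continuous_neg.aestronglyMeasurable.mul hK
    · exact abs_neg_mul_le_of_abs_le hC

lemma neg_one_pow_mul_iteratedDeriv_laplaceTransform_nonneg
    (hK : AEStronglyMeasurable K (volume.restrict (Ioi 0)))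
    (hC : ∀ t ∈ Ioi 0, |K t| ≤ C * t ^ m) (hK₀ : ∀ t ∈ Ioi 0, 0 ≤ K t) (n : ℕ) {x : ℝ}
    (hx : 0 < x) : 0 ≤ (-1) ^ n * iteratedDeriv n (laplaceTransform K) x := by
  rw [iteratedDeriv_laplaceTransform hK hC n hx, laplaceTransform, ← integral_const_mul]
  refine setIntegral_nonneg measurableSet_Ioi fun t ht => ?_
  have hsign : (-1) ^ n * ((-t) ^ n * K t * exp (-x * t)) = t ^ n * K t * exp (-x * t) := by
    have hsq : (-1 : ℝ) ^ n * (-1) ^ n = 1 := by rw [← mul_pow]; norm_num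
    rw [neg_pow t]
    linear_combination (t ^ n * K t * exp (-x * t)) * hsq
  rw [hsign]
  have := hK₀ t ht
  have := mem_Ioi.1 ht
  positivity

end Laplace

noncomputable def binetTheta (x : ℝ) : ℝ := ∫ t in Ioi 0, binetDelta t * (exp (-x * t) / t)

noncomputable def binetKernel (p q t : ℝ) : ℝ := (binetDelta (t / p) - q * binetDelta t) / t

lemma abs_binetDelta_div_div_le {r t : ℝ} (hr : 0 < r) (ht : 0 < t) :
    |binetDelta (t / r) / t| ≤ 1 / (4 * r) := by
  have htr : 0 < t / r := div_pos ht hr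
  rw [abs_of_nonneg (div_nonneg (binetDelta_nonneg htr) ht.le), div_le_iff₀ ht]
  calc binetDelta (t / r) ≤ t / r / 4 := binetDelta_le_div_four htr
    _ = 1 / (4 * r) * t := by field_simp

lemma measurable_binetKernel (p q : ℝ) : Measurable (binetKernel p q) := by
  unfold binetKernel; fun_prop

lemma binetKernel_nonneg {p q t : ℝ} (hp0 : 0 < p) (hp1 : p ≤ 1) (hq : q ≤ 1) (ht : 0 < t) :
    0 ≤ binetKernel p q t := by
  have hδ : 0 ≤ binetDelta t := binetDelta_nonneg ht
  have hmono : binetDelta t ≤ binetDelta (t / p) :=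
    monotoneOn_binetDelta ht (div_pos ht hp0) (le_div_self ht.le hp0 hp1)
  exact div_nonneg (by nlinarith) ht.le

lemma abs_binetKernel_le {p t : ℝ} (hp : 0 < p) (q : ℝ) (ht : 0 < t) :
    |binetKernel p q t| ≤ 1 / (4 * p) + |q| / 4 := by
  have h₁ := abs_binetDelta_div_div_le hp ht
  have h₂ : |binetDelta t / t| ≤ 1 / 4 := by simpa using abs_binetDelta_div_div_le one_pos ht
  calc |binetKernel p q t| = |binetDelta (t / p) / t - q * (binetDelta t / t)| := by
        rw [binetKernel, sub_div, mul_div_assoc]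
    _ ≤ |binetDelta (t / p) / t| + |q| * |binetDelta t / t| := by
        rw [← abs_mul]; exact abs_sub _ _
    _ ≤ 1 / (4 * p) + |q| / 4 := by nlinarith [abs_nonneg q]

lemma binetTheta_mul_eq_laplaceTransform {p : ℝ} (hp : 0 < p) (y : ℝ) :
    binetTheta (p * y) = laplaceTransform (fun t => binetDelta (t / p) / t) y := by
  have hcv := integral_comp_mul_left_Ioi
    (fun u => binetDelta u * (exp (-(p * y) * u) / u)) 0 (inv_pos.2 hp)
  rw [mul_zero, inv_inv, smul_eq_mul] at hcv
  have hpt : ∀ t, binetDelta (t / p) / t * exp (-y * t)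
      = p⁻¹ * (binetDelta (p⁻¹ * t) * (exp (-(p * y) * (p⁻¹ * t)) / (p⁻¹ * t))) := fun t => by
    rw [← div_eq_inv_mul t p, show -(p * y) * (t / p) = -y * t by field_simp]
    field_simp
  rw [laplaceTransform, funext hpt, integral_const_mul, hcv, binetTheta, ← mul_assoc,
    inv_mul_cancel₀ hp.ne', one_mul]

lemma binetTheta_comp_mul_sub_eq_laplaceTransform {p : ℝ} (hp : 0 < p) (q : ℝ) {y : ℝ}
    (hy : 0 < y) :
    binetTheta (p * y) - q * binetTheta y = laplaceTransform (binetKernel p q) y := by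
  have hθ : binetTheta y = laplaceTransform (fun t => binetDelta t / t) y := by
    simpa using binetTheta_mul_eq_laplaceTransform one_pos y
  have hint : ∀ r, 0 < r → IntegrableOn (fun t => binetDelta (t / r) / t * exp (-y * t)) (Ioi 0) :=
    fun r hr => integrableOn_laplaceTransform (m := 0)
      (by fun_prop : Measurable fun t => binetDelta (t / r) / t).aestronglyMeasurable
      (fun t ht => by simpa using abs_binetDelta_div_div_le hr ht) hy
  have hint₁ : IntegrableOn (fun t => binetDelta t / t * exp (-y * t)) (Ioi 0) := by
    simpa using hint 1 one_pos
  rw [binetTheta_mul_eq_laplaceTransform hp, hθ, laplaceTransform, laplaceTransform,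
    ← integral_const_mul, ← integral_sub (hint p hp) (hint₁.const_mul q)]
  refine integral_congr_ae (Eventually.of_forall fun t => ?_)
  simp only [binetKernel]
  ring

theorem theta_diff_completely_monotonic (p q : ℝ) (hp0 : 0 < p) (hp1 : p ≤ 1)
    (hq : q ≤ 1) (n : ℕ) (x : ℝ) (hx : 0 < x) :
    0 ≤ (-1 : ℝ) ^ n * iteratedDeriv n (fun y : ℝ =>
      (∫ t in Set.Ioi (0 : ℝ),
          (1 / (Real.exp t - 1) - 1 / t + 1 / 2) * (Real.exp (-(p * y) * t) / t)) -
        q * ∫ t in Set.Ioi (0 : ℝ),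
          (1 / (Real.exp t - 1) - 1 / t + 1 / 2) * (Real.exp (-y * t) / t)) x := by
  change 0 ≤ (-1) ^ n * iteratedDeriv n (fun y => binetTheta (p * y) - q * binetTheta y) x
  have hlaplace : (fun y => binetTheta (p * y) - q * binetTheta y)
      =ᶠ[nhds x] laplaceTransform (binetKernel p q) := by
    filter_upwards [Ioi_mem_nhds hx] with y hy
    exact binetTheta_comp_mul_sub_eq_laplaceTransform hp0 q hy
  rw [hlaplace.iteratedDeriv_eq]
  exact neg_one_pow_mul_iteratedDeriv_laplaceTransform_nonneg (m := 0)
    (measurable_binetKernel p q).aestronglyMeasurable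
    (fun t ht => by simpa using abs_binetKernel_le hp0 q ht)
    (fun t ht => binetKernel_nonneg hp0 hp1 hq ht) n hx
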